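/- Let w, v, c ∈ Q and let 1 ≤ i, k, p ≤ m with k ≠ p. Then the triple commutator [E_{i,w}, [E*_{k,v}, E*_{p,c}]] acts on M as follows: (1) if i = p, it sends (z,x,f) to (z − f_k(x)·⟨c,v⟩·w, x − f_k(x)·⟨c,v⟩·q(w)·x_p, f + (⟨w,z⟩ + f(x_p)·q(w) − f_k(x)·⟨c,v⟩·q(w))·⟨c,v⟩·f_k); (2) if i = k, it sends (z,x,f) to (z + f_p(x)·⟨c,v⟩·w, x + f_p(x)·⟨c,v⟩·q(w)·x_k, f − (⟨w,z⟩ + f(x_k)·q(w) + f_p(x)·⟨c,v⟩·q(w))·⟨c,v⟩·f_p); (3) if i ≠ p and i ≠ k, it is the identity automorphism of M. -/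

import Mathlib

open QuadraticMap
open scoped commutatorElement

/-- The DSER elementary orthogonal transformation `E_{i,w}` on `M = Q ⊕ P ⊕ P*`,
`P = A^m`:  `E_{i,w}(z,x,f) = (z − f(xᵢ)•w, x + ⟨w,z⟩•xᵢ − f(xᵢ)·q(w)•xᵢ, f)`. -/
noncomputable def Eplus {A Q : Type*} [CommRing A] [AddCommGroup Q] [Module A Q]
    {m : ℕ} (q : QuadraticForm A Q) (i : Fin m) (w : Q) :
    (Q × (Fin m → A) × (Fin m → A)) ≃ₗ[A] (Q × (Fin m → A) × (Fin m → A)) where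
  toFun p := (p.1 - p.2.2 i • w,
    p.2.1 + polar ⇑q w p.1 • (Pi.single i 1 : Fin m → A)
      - (p.2.2 i * q w) • (Pi.single i 1 : Fin m → A),
    p.2.2)
  invFun p := (p.1 + p.2.2 i • w,
    p.2.1 - polar ⇑q w p.1 • (Pi.single i 1 : Fin m → A)
      - (p.2.2 i * q w) • (Pi.single i 1 : Fin m → A),
    p.2.2)
  map_add' p p' := by
    obtain ⟨z, x, f⟩ := p
    obtain ⟨z', x', f'⟩ := p'
    refine Prod.ext ?_ (Prod.ext ?_ rfl)
    · show z + z' - (f i + f' i) • w = (z - f i • w) + (z' - f' i • w)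
      module
    · show x + x' + polar ⇑q w (z + z') • (Pi.single i 1 : Fin m → A)
        - ((f i + f' i) * q w) • (Pi.single i 1 : Fin m → A) = _
      rw [polar_add_right]
      show _ = (x + polar ⇑q w z • (Pi.single i 1 : Fin m → A) - (f i * q w) • (Pi.single i 1 : Fin m → A))
        + (x' + polar ⇑q w z' • (Pi.single i 1 : Fin m → A) - (f' i * q w) • (Pi.single i 1 : Fin m → A))
      module
  map_smul' a p := by
    obtain ⟨z, x, f⟩ := p
    refine Prod.ext ?_ (Prod.ext ?_ rfl)
    · show a • z - (a • f) i • w = a • (z - f i • w)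
      simp only [Pi.smul_apply, smul_eq_mul]
      module
    · show a • x + polar ⇑q w (a • z) • (Pi.single i 1 : Fin m → A)
        - ((a • f) i * q w) • (Pi.single i 1 : Fin m → A)
        = a • (x + polar ⇑q w z • (Pi.single i 1 : Fin m → A) - (f i * q w) • (Pi.single i 1 : Fin m → A))
      rw [polar_smul_right]
      simp only [Pi.smul_apply, smul_eq_mul]
      module
  left_inv p := by
    obtain ⟨z, x, f⟩ := p
    refine Prod.ext ?_ (Prod.ext ?_ rfl)
    · show z - f i • w + f i • w = z
      module
    · show x + polar ⇑q w z • (Pi.single i 1 : Fin m → A) - (f i * q w) • (Pi.single i 1 : Fin m → A)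
        - polar ⇑q w (z - f i • w) • (Pi.single i 1 : Fin m → A)
        - (f i * q w) • (Pi.single i 1 : Fin m → A) = x
      rw [polar_sub_right, polar_smul_right, polar_self]
      simp only [smul_eq_mul]
      module
  right_inv p := by
    obtain ⟨z, x, f⟩ := p
    refine Prod.ext ?_ (Prod.ext ?_ rfl)
    · show z + f i • w - f i • w = z
      module
    · show x - polar ⇑q w z • (Pi.single i 1 : Fin m → A) - (f i * q w) • (Pi.single i 1 : Fin m → A)
        + polar ⇑q w (z + f i • w) • (Pi.single i 1 : Fin m → A)
        - (f i * q w) • (Pi.single i 1 : Fin m → A) = x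
      rw [polar_add_right, polar_smul_right, polar_self]
      simp only [smul_eq_mul]
      module

/-- The DSER elementary orthogonal transformation `E*_{i,w}` on `M = Q ⊕ P ⊕ P*`:
`E*_{i,w}(z,x,f) = (z − fᵢ(x)•w, x, f + ⟨w,z⟩•fᵢ − fᵢ(x)·q(w)•fᵢ)`. -/
noncomputable def Estar {A Q : Type*} [CommRing A] [AddCommGroup Q] [Module A Q]
    {m : ℕ} (q : QuadraticForm A Q) (i : Fin m) (w : Q) :
    (Q × (Fin m → A) × (Fin m → A)) ≃ₗ[A] (Q × (Fin m → A) × (Fin m → A)) where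
  toFun p := (p.1 - p.2.1 i • w,
    p.2.1,
    p.2.2 + polar ⇑q w p.1 • (Pi.single i 1 : Fin m → A)
      - (p.2.1 i * q w) • (Pi.single i 1 : Fin m → A))
  invFun p := (p.1 + p.2.1 i • w,
    p.2.1,
    p.2.2 - polar ⇑q w p.1 • (Pi.single i 1 : Fin m → A)
      - (p.2.1 i * q w) • (Pi.single i 1 : Fin m → A))
  map_add' p p' := by
    obtain ⟨z, x, f⟩ := p
    obtain ⟨z', x', f'⟩ := p'
    refine Prod.ext ?_ (Prod.ext rfl ?_)
    · show z + z' - (x i + x' i) • w = (z - x i • w) + (z' - x' i • w)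
      module
    · show f + f' + polar ⇑q w (z + z') • (Pi.single i 1 : Fin m → A)
        - ((x i + x' i) * q w) • (Pi.single i 1 : Fin m → A) = _
      rw [polar_add_right]
      show _ = (f + polar ⇑q w z • (Pi.single i 1 : Fin m → A)
          - (x i * q w) • (Pi.single i 1 : Fin m → A))
        + (f' + polar ⇑q w z' • (Pi.single i 1 : Fin m → A)
          - (x' i * q w) • (Pi.single i 1 : Fin m → A))
      module
  map_smul' a p := by
    obtain ⟨z, x, f⟩ := p
    refine Prod.ext ?_ (Prod.ext rfl ?_)
    · show a • z - (a • x) i • w = a • (z - x i • w)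
      simp only [Pi.smul_apply, smul_eq_mul]
      module
    · show a • f + polar ⇑q w (a • z) • (Pi.single i 1 : Fin m → A)
        - ((a • x) i * q w) • (Pi.single i 1 : Fin m → A)
        = a • (f + polar ⇑q w z • (Pi.single i 1 : Fin m → A)
          - (x i * q w) • (Pi.single i 1 : Fin m → A))
      rw [polar_smul_right]
      simp only [Pi.smul_apply, smul_eq_mul]
      module
  left_inv p := by
    obtain ⟨z, x, f⟩ := p
    refine Prod.ext ?_ (Prod.ext rfl ?_)
    · show z - x i • w + x i • w = z
      module
    · show f + polar ⇑q w z • (Pi.single i 1 : Fin m → A)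
        - (x i * q w) • (Pi.single i 1 : Fin m → A)
        - polar ⇑q w (z - x i • w) • (Pi.single i 1 : Fin m → A)
        - (x i * q w) • (Pi.single i 1 : Fin m → A) = f
      rw [polar_sub_right, polar_smul_right, polar_self]
      simp only [smul_eq_mul]
      module
  right_inv p := by
    obtain ⟨z, x, f⟩ := p
    refine Prod.ext ?_ (Prod.ext rfl ?_)
    · show z + x i • w - x i • w = z
      module
    · show f - polar ⇑q w z • (Pi.single i 1 : Fin m → A)
        - (x i * q w) • (Pi.single i 1 : Fin m → A)
        + polar ⇑q w (z + x i • w) • (Pi.single i 1 : Fin m → A)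
        - (x i * q w) • (Pi.single i 1 : Fin m → A) = f
      rw [polar_add_right, polar_smul_right, polar_self]
      simp only [smul_eq_mul]
      module

/-!
The commutator of `E*_{k,v}` and `E*_{p,c}` fixes `z` and `x` and moves `f` by
`-⟨c,v⟩ • (x_p • f_k - x_k • f_p)`, for all `k, p`. Conjugating this shear by `E_{i,w}` gives one
closed formula for the triple commutator, valid for all `i, k, p`, in which `i` enters only through
the `i`-th coordinate of `x_p • e_k - x_k • e_p` and the vector `e_i p • e_k - e_i k • e_p`; the three
cases of the theorem are the three values these take when `k ≠ p`.
-/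

section Elementary

variable {A Q : Type*} [CommRing A] [AddCommGroup Q] [Module A Q] {m : ℕ}

def elemAlt (k p : Fin m) : (Fin m → A) →ₗ[A] Fin m → A :=
  (LinearMap.proj p).smulRight (Pi.single k 1) - (LinearMap.proj k).smulRight (Pi.single p 1)

theorem elemAlt_apply (k p : Fin m) (x : Fin m → A) :
    elemAlt k p x = x p • Pi.single k 1 - x k • Pi.single p 1 := rfl

theorem elemAlt_swap (k p : Fin m) (x : Fin m → A) : elemAlt p k x = -elemAlt k p x := by
  simp only [elemAlt_apply, neg_sub]

theorem elemAlt_single_apply_self (k p i : Fin m) :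
    elemAlt k p (Pi.single i 1 : Fin m → A) i = 0 := by
  rcases eq_or_ne i k with rfl | hik <;> rcases eq_or_ne i p with rfl | hip <;>
    simp [elemAlt_apply, *]

variable (q : QuadraticForm A Q) (i : Fin m) (w z : Q) (x f : Fin m → A)

theorem Eplus_apply : Eplus q i w (z, x, f) = (z - f i • w,
      x + polar q w z • Pi.single i 1 - (f i * q w) • Pi.single i 1,
      f) := rfl

theorem Eplus_symm_apply : (Eplus q i w).symm (z, x, f) = (z + f i • w,
      x - polar q w z • Pi.single i 1 - (f i * q w) • Pi.single i 1,
      f) := rfl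

theorem Estar_apply : Estar q i w (z, x, f) = (z - x i • w, x,
      f + polar q w z • Pi.single i 1 - (x i * q w) • Pi.single i 1) :=
  rfl

theorem Estar_symm_apply : (Estar q i w).symm (z, x, f) = (z + x i • w, x,
      f - polar q w z • Pi.single i 1 - (x i * q w) • Pi.single i 1) :=
  rfl

theorem commutator_Estar_Estar_apply (k p : Fin m) (v c : Q) :
    ⁅Estar q k v, Estar q p c⁆ (z, x, f) = (z, x, f - polar q c v • elemAlt k p x) := by
  simp only [commutatorElement_def, LinearEquiv.mul_apply, LinearEquiv.coe_inv, Estar_symm_apply,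
    Estar_apply, elemAlt_apply, polar_add_right, polar_sub_right, polar_smul_right, polar_self,
    polar_comm q v c, smul_eq_mul]
  exact Prod.ext (by module) (Prod.ext rfl (by module))

theorem commutator_Eplus_commutator_Estar_Estar_apply (k p : Fin m) (v c : Q) :
    ⁅Eplus q i w, ⁅Estar q k v, Estar q p c⁆⁆ (z, x, f) =
      (z + (polar q c v * elemAlt k p x i) • w,
        x + (polar q c v * elemAlt k p x i * q w) • Pi.single i 1,
        f + (polar q c v * (polar q w z + (f i + polar q c v * elemAlt k p x i) * q w)) •
          elemAlt k p (Pi.single i 1)) := by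
  rw [commutatorElement_def (Eplus q i w), commutatorElement_inv]
  simp only [LinearEquiv.mul_apply, LinearEquiv.coe_inv, commutator_Estar_Estar_apply,
    Eplus_symm_apply, Eplus_apply, map_sub, map_smul, elemAlt_swap k p, polar_comm q v c,
    Pi.sub_apply, Pi.smul_apply, Pi.neg_apply, smul_eq_mul,
    elemAlt_single_apply_self, polar_add_right, polar_smul_right, polar_self]
  exact Prod.ext (by module) (Prod.ext (by module) (by module))

end Elementary

theorem triple_commutator_Eplus_EstarEstar_general
    {A Q : Type*} [CommRing A] [AddCommGroup Q] [Module A Q]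
    {m : ℕ} (q : QuadraticForm A Q) (i k p : Fin m) (hkp : k ≠ p)
    (w v c : Q) :
    (i = p → ∀ (z : Q) (x f : Fin m → A),
      ⁅Eplus q i w, ⁅Estar q k v, Estar q p c⁆⁆ (z, x, f)
        = (z - (x k * polar ⇑q c v) • w,
           x - (x k * polar ⇑q c v * q w) • (Pi.single p 1 : Fin m → A),
           f + ((polar ⇑q w z + f p * q w - x k * polar ⇑q c v * q w)
               * polar ⇑q c v) • (Pi.single k 1 : Fin m → A))) ∧
    (i = k → ∀ (z : Q) (x f : Fin m → A),
      ⁅Eplus q i w, ⁅Estar q k v, Estar q p c⁆⁆ (z, x, f)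
        = (z + (x p * polar ⇑q c v) • w,
           x + (x p * polar ⇑q c v * q w) • (Pi.single k 1 : Fin m → A),
           f - ((polar ⇑q w z + f k * q w + x p * polar ⇑q c v * q w)
               * polar ⇑q c v) • (Pi.single p 1 : Fin m → A))) ∧
    (i ≠ p → i ≠ k → ⁅Eplus q i w, ⁅Estar q k v, Estar q p c⁆⁆ = 1) := by
  refine ⟨?_, ?_, fun hip hik ↦ LinearEquiv.ext fun ⟨z, x, f⟩ ↦ by
    simp [commutator_Eplus_commutator_Estar_Estar_apply, elemAlt_apply, hip, hik]⟩
  all_goals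
    rintro rfl z x f
    rw [commutator_Eplus_commutator_Estar_Estar_apply]
    simp only [elemAlt_apply, Pi.sub_apply, Pi.smul_apply, Pi.single_eq_same,
      Pi.single_eq_of_ne hkp, Pi.single_eq_of_ne' hkp, smul_eq_mul, mul_one, mul_zero, zero_smul,
      one_smul, sub_zero, zero_sub]
    exact Prod.ext (by module) (Prod.ext (by module) (by module))

theorem triple_commutator_Eplus_EstarEstar
    {A Q : Type*} [CommRing A] [Invertible (2 : A)] [AddCommGroup Q] [Module A Q]
    {m : ℕ} (q : QuadraticForm A Q) (i k p : Fin m) (hkp : k ≠ p)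
    (w v c : Q) :
    (i = p → ∀ (z : Q) (x f : Fin m → A),
      ⁅Eplus q i w, ⁅Estar q k v, Estar q p c⁆⁆ (z, x, f)
        = (z - (x k * polar ⇑q c v) • w,
           x - (x k * polar ⇑q c v * q w) • (Pi.single p 1 : Fin m → A),
           f + ((polar ⇑q w z + f p * q w - x k * polar ⇑q c v * q w)
               * polar ⇑q c v) • (Pi.single k 1 : Fin m → A))) ∧
    (i = k → ∀ (z : Q) (x f : Fin m → A),
      ⁅Eplus q i w, ⁅Estar q k v, Estar q p c⁆⁆ (z, x, f)
        = (z + (x p * polar ⇑q c v) • w,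
           x + (x p * polar ⇑q c v * q w) • (Pi.single k 1 : Fin m → A),
           f - ((polar ⇑q w z + f k * q w + x p * polar ⇑q c v * q w)
               * polar ⇑q c v) • (Pi.single p 1 : Fin m → A))) ∧
    (i ≠ p → i ≠ k → ⁅Eplus q i w, ⁅Estar q k v, Estar q p c⁆⁆ = 1) :=
  triple_commutator_Eplus_EstarEstar_general q i k p hkp w v c
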